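/- Let h be a real invertible 3×3 matrix with det(h) > 0, let q_1,…,q_N be real charges with Σ_i q_i = 0, let r_1,…,r_N ∈ ℝ³, and let w̃_ℓ > 0, s̃_ℓ > 0 for ℓ = 0,…,M̃−1. Let 𝒫^r be the probability mass function on the nonzero reciprocal vectors K = {2π h^{−⊤} m : m ∈ ℤ³, m ≠ 0} given by 𝒫^r(k) = (1/S^r) Σ_ℓ π^{3/2} w̃_ℓ s̃_ℓ⁵ |k|² e^{−s̃_ℓ²|k|²/4} with normalization S^r, and let 𝒫^{nr}(k) = (1/S^{nr}) Σ_ℓ π^{3/2} w̃_ℓ s̃_ℓ⁷ |k|⁴ e^{−s̃_ℓ²|k|²/4} with normalization S^{nr}. If k^r ∼ 𝒫^r and k^{nr} ∼ 𝒫^{nr}, then for all μ, ν ∈ {1,2,3}: E[(S^r/(4 det(h)²)) |ρ(k^r)|²/|k^r|² · δ_{μν}] = (P^{F,r})_{μν} and E[−(S^{nr}/(8 det(h)²)) |ρ(k^{nr})|² (k^{nr})_μ (k^{nr})_ν / |k^{nr}|⁴] = (P^{F,nr})_{μν}, where (P^{F,r})_{μν} = (δ_{μν}/(4 det(h)²))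 Σ_{k∈K} Σ_ℓ π^{3/2} w̃_ℓ s̃_ℓ⁵ e^{−s̃_ℓ²|k|²/4} |ρ(k)|² and (P^{F,nr})_{μν} = −(1/(8 det(h)²)) Σ_{k∈K} Σ_ℓ π^{3/2} w̃_ℓ s̃_ℓ⁷ e^{−s̃_ℓ²|k|²/4} |ρ(k)|² k_μ k_ν. In particular, averaging such single-sample estimators over an i.i.d. batch of size P yields an unbiased estimator of the long-range pressure tensor P^{F,r} + P^{F,nr}. -/

import Mathlib

open Real Matrix

/-- Squared Euclidean length of a vector in `Fin 3 → ℝ`. -/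
noncomputable def nsq (v : Fin 3 → ℝ) : ℝ := ∑ i, v i ^ 2

/-- The reciprocal lattice vector `k_m = 2π h^{-⊤} m`. -/
noncomputable def recipVec (h : Matrix (Fin 3) (Fin 3) ℝ) (m : Fin 3 → ℤ) : Fin 3 → ℝ :=
  (2 * π) • (h⁻¹)ᵀ.mulVec fun i => (m i : ℝ)

/-- The structure factor `ρ(k) = Σ_i q_i e^{i k·r_i}`. -/
noncomputable def structFactor {N : ℕ} (q : Fin N → ℝ) (r : Fin N → (Fin 3 → ℝ))
    (k : Fin 3 → ℝ) : ℂ :=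
  ∑ i, ((q i : ℝ) : ℂ) * Complex.exp (Complex.I * ((k ⬝ᵥ r i : ℝ) : ℂ))

/-- Unnormalized radial sampling weight `Σ_ℓ π^{3/2} w̃_ℓ s̃_ℓ⁵ |k|² e^{-s̃_ℓ²|k|²/4}`. -/
noncomputable def radWeight (h : Matrix (Fin 3) (Fin 3) ℝ) {M : ℕ} (w s : Fin M → ℝ)
    (m : Fin 3 → ℤ) : ℝ :=
  ∑ ℓ, π ^ ((3 : ℝ) / 2) * w ℓ * s ℓ ^ 5 * nsq (recipVec h m) *
    Real.exp (-s ℓ ^ 2 * nsq (recipVec h m) / 4)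

/-- Unnormalized non-radial sampling weight `Σ_ℓ π^{3/2} w̃_ℓ s̃_ℓ⁷ |k|⁴ e^{-s̃_ℓ²|k|²/4}`. -/
noncomputable def nradWeight (h : Matrix (Fin 3) (Fin 3) ℝ) {M : ℕ} (w s : Fin M → ℝ)
    (m : Fin 3 → ℤ) : ℝ :=
  ∑ ℓ, π ^ ((3 : ℝ) / 2) * w ℓ * s ℓ ^ 7 * nsq (recipVec h m) ^ 2 *
    Real.exp (-s ℓ ^ 2 * nsq (recipVec h m) / 4)

/-- Normalization `S^r = Σ_{m ≠ 0} Σ_ℓ π^{3/2} w̃_ℓ s̃_ℓ⁵ |k_m|² e^{-s̃_ℓ²|k_m|²/4}`. -/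
noncomputable def Sr (h : Matrix (Fin 3) (Fin 3) ℝ) {M : ℕ} (w s : Fin M → ℝ) : ℝ :=
  ∑' m : Fin 3 → ℤ, if m = 0 then 0 else radWeight h w s m

/-- Normalization `S^{nr} = Σ_{m ≠ 0} Σ_ℓ π^{3/2} w̃_ℓ s̃_ℓ⁷ |k_m|⁴ e^{-s̃_ℓ²|k_m|²/4}`. -/
noncomputable def Snr (h : Matrix (Fin 3) (Fin 3) ℝ) {M : ℕ} (w s : Fin M → ℝ) : ℝ :=
  ∑' m : Fin 3 → ℤ, if m = 0 then 0 else nradWeight h w s m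

set_option maxHeartbeats 1000000

lemma nsq_nonneg (v : Fin 3 → ℝ) : 0 ≤ nsq v :=
  Finset.sum_nonneg fun i _ => sq_nonneg _

lemma nsq_pos_of_ne_zero {v : Fin 3 → ℝ} (hv : v ≠ 0) : 0 < nsq v := by
  rcases (nsq_nonneg v).lt_or_eq with h | h
  · exact h
  · exfalso; apply hv; funext i
    have := (Finset.sum_eq_zero_iff_of_nonneg (fun i _ => sq_nonneg (v i))).1 h.symm i
      (Finset.mem_univ i)
    have := pow_eq_zero_iff (n := 2) (by norm_num) |>.1 this
    simpa using this

lemma summable_gauss_int {a : ℝ} (ha : 0 < a) :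
    Summable fun n : ℤ => Real.exp (-(a * (n : ℝ) ^ 2)) := by
  have hr1 : Real.exp (-a) < 1 := Real.exp_lt_one_iff.2 (by linarith)
  have hgeo : Summable fun k : ℕ => Real.exp (-a) ^ k :=
    summable_geometric_of_lt_one (Real.exp_nonneg _) hr1
  have h1 : Summable fun n : ℤ => Real.exp (-a) ^ n.natAbs := by
    apply Summable.of_nat_of_neg <;> simpa using hgeo
  refine h1.of_nonneg_of_le (fun n => (Real.exp_nonneg _)) ?_
  intro n
  rw [← Real.exp_nat_mul]
  apply Real.exp_le_exp.mpr
  have hsq : ((n : ℝ)) ^ 2 = ((n.natAbs : ℝ)) ^ 2 := by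
    simp [Nat.cast_natAbs, sq_abs]
  have hb : (n.natAbs : ℝ) ≤ ((n.natAbs : ℝ)) ^ 2 := by
    rcases Nat.eq_zero_or_pos n.natAbs with h0 | h0
    · simp [h0]
    · have : (1 : ℝ) ≤ (n.natAbs : ℝ) := by exact_mod_cast h0
      nlinarith
  rw [hsq]
  nlinarith [hb]

lemma summable_gauss_pi {a : ℝ} (ha : 0 < a) :
    Summable fun m : Fin 3 → ℤ => Real.exp (-(a * ∑ i, ((m i : ℝ)) ^ 2)) := by
  have g := summable_gauss_int ha
  have gn : (0 : ℤ → ℝ) ≤ fun n : ℤ => Real.exp (-(a * (n : ℝ) ^ 2)) :=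
    fun n => Real.exp_nonneg _
  have h2 : Summable fun p : ℤ × ℤ =>
      Real.exp (-(a * (p.1 : ℝ) ^ 2)) * Real.exp (-(a * (p.2 : ℝ) ^ 2)) :=
    g.mul_of_nonneg g gn gn
  have h3 : Summable fun p : ℤ × ℤ × ℤ =>
      Real.exp (-(a * (p.1 : ℝ) ^ 2)) *
        (Real.exp (-(a * (p.2.1 : ℝ) ^ 2)) * Real.exp (-(a * (p.2.2 : ℝ) ^ 2))) :=
    g.mul_of_nonneg h2 gn (fun p => mul_nonneg (Real.exp_nonneg _) (Real.exp_nonneg _))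
  let e : (Fin 3 → ℤ) ≃ ℤ × ℤ × ℤ :=
    { toFun := fun m => (m 0, m 1, m 2)
      invFun := fun p => ![p.1, p.2.1, p.2.2]
      left_inv := by intro m; funext i; fin_cases i <;> rfl
      right_inv := by intro p; rfl }
  have h4 := (e.summable_iff.2 h3)
  refine h4.congr ?_
  intro m
  show Real.exp (-(a * (m 0 : ℝ) ^ 2)) * _ = _
  rw [← Real.exp_add, ← Real.exp_add, Fin.sum_univ_three]
  ring_nf
  rfl

lemma nsq_mulVec_le (B : Matrix (Fin 3) (Fin 3) ℝ) (v : Fin 3 → ℝ) :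
    nsq (B.mulVec v) ≤ (∑ i, ∑ j, B i j ^ 2) * nsq v := by
  unfold nsq
  rw [Finset.sum_mul]
  apply Finset.sum_le_sum
  intro i _
  calc (B.mulVec v i) ^ 2 = (∑ j, B i j * v j) ^ 2 := by
        simp [Matrix.mulVec, dotProduct]
    _ ≤ (∑ j, B i j ^ 2) * (∑ j, v j ^ 2) := Finset.sum_mul_sq_le_sq_mul_sq _ _ _

lemma recip_lower (h : Matrix (Fin 3) (Fin 3) ℝ) (hdet : 0 < h.det) :
    ∃ c > 0, ∀ m : Fin 3 → ℤ, c * (∑ i, ((m i : ℝ)) ^ 2) ≤ nsq (recipVec h m) := by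
  set A : Matrix (Fin 3) (Fin 3) ℝ := (2 * π) • (h⁻¹)ᵀ with hA
  have h1 : h.det ≠ 0 := ne_of_gt hdet
  have hAdet : A.det = (2 * π) ^ 3 * h.det⁻¹ := by
    simp [hA, Matrix.det_smul, Matrix.det_transpose, Matrix.det_nonsing_inv,
      Ring.inverse_eq_inv']
  have hdA : IsUnit A.det := isUnit_iff_ne_zero.2 (by
    rw [hAdet]; exact mul_ne_zero (by positivity) (inv_ne_zero h1))
  set C : ℝ := (∑ i, ∑ j, (A⁻¹) i j ^ 2) + 1 with hC
  have hCpos : 0 < C := by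
    rw [hC]; positivity
  refine ⟨1 / C, by positivity, fun m => ?_⟩
  have hrv : recipVec h m = A.mulVec (fun i => (m i : ℝ)) := by
    simp [recipVec, hA, Matrix.smul_mulVec]
  have hid : (fun i => (m i : ℝ)) = A⁻¹.mulVec (A.mulVec (fun i => (m i : ℝ))) := by
    rw [Matrix.mulVec_mulVec, Matrix.nonsing_inv_mul _ hdA, Matrix.one_mulVec]
  have key : (∑ i, ((m i : ℝ)) ^ 2) ≤ C * nsq (recipVec h m) := by
    have h1 : (∑ i, ((m i : ℝ)) ^ 2) = nsq (fun i => (m i : ℝ)) := rfl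
    rw [h1, hid, hrv]
    calc nsq (A⁻¹.mulVec (A.mulVec fun i => (m i : ℝ)))
        ≤ (∑ i, ∑ j, (A⁻¹) i j ^ 2) * nsq (A.mulVec fun i => (m i : ℝ)) :=
          nsq_mulVec_le _ _
      _ ≤ C * nsq (A.mulVec fun i => (m i : ℝ)) := by
          apply mul_le_mul_of_nonneg_right _ (nsq_nonneg _)
          rw [hC]; linarith
  calc (1 / C) * (∑ i, ((m i : ℝ)) ^ 2)
      ≤ (1 / C) * (C * nsq (recipVec h m)) :=
        mul_le_mul_of_nonneg_left key (by positivity)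
    _ = nsq (recipVec h m) := by field_simp

lemma nsq_recip_pos (h : Matrix (Fin 3) (Fin 3) ℝ) (hdet : 0 < h.det)
    {m : Fin 3 → ℤ} (hm : m ≠ 0) : 0 < nsq (recipVec h m) := by
  obtain ⟨c, hc, hle⟩ := recip_lower h hdet
  have hex : ∃ i, m i ≠ 0 := by
    by_contra hco; push_neg at hco
    exact hm (funext fun i => hco i)
  obtain ⟨i, hi⟩ := hex
  have h1 : (0 : ℝ) < ((m i : ℝ)) ^ 2 := by
    have : ((m i : ℝ)) ≠ 0 := Int.cast_ne_zero.2 hi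
    positivity
  have h2 : ((m i : ℝ)) ^ 2 ≤ ∑ j, ((m j : ℝ)) ^ 2 :=
    Finset.single_le_sum (f := fun j => ((m j : ℝ)) ^ 2)
      (fun j _ => sq_nonneg _) (Finset.mem_univ i)
  nlinarith [hle m]

lemma summable_x_gauss (h : Matrix (Fin 3) (Fin 3) ℝ) (hdet : 0 < h.det)
    {b : ℝ} (hb : 0 < b) :
    Summable fun m : Fin 3 → ℤ =>
      nsq (recipVec h m) * Real.exp (-(b * nsq (recipVec h m))) := by
  obtain ⟨c, hc, hcle⟩ := recip_lower h hdet
  have hmain := (summable_gauss_pi (a := b * c / 2) (by positivity)).mul_left (2 / b)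
  refine hmain.of_nonneg_of_le
    (fun m => mul_nonneg (nsq_nonneg _) (Real.exp_nonneg _)) ?_
  intro m
  set x := nsq (recipVec h m) with hx
  have hx0 : 0 ≤ x := nsq_nonneg _
  have h1 : x ≤ (2 / b) * Real.exp (b / 2 * x) := by
    have h2 : b / 2 * x ≤ Real.exp (b / 2 * x) := by
      have := Real.add_one_le_exp (b / 2 * x); linarith
    calc x = (2 / b) * (b / 2 * x) := by field_simp
      _ ≤ (2 / b) * Real.exp (b / 2 * x) :=
          mul_le_mul_of_nonneg_left h2 (by positivity)
  calc x * Real.exp (-(b * x))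
      ≤ ((2 / b) * Real.exp (b / 2 * x)) * Real.exp (-(b * x)) :=
        mul_le_mul_of_nonneg_right h1 (Real.exp_nonneg _)
    _ = (2 / b) * Real.exp (b / 2 * x + -(b * x)) := by
        rw [mul_assoc, Real.exp_add]
    _ = (2 / b) * Real.exp (-(b / 2 * x)) := by ring_nf
    _ ≤ (2 / b) * Real.exp (-(b * c / 2 * ∑ i, ((m i : ℝ)) ^ 2)) := by
        apply mul_le_mul_of_nonneg_left _ (by positivity)
        apply Real.exp_le_exp.mpr
        have := hcle m
        nlinarith

lemma summable_x2_gauss (h : Matrix (Fin 3) (Fin 3) ℝ) (hdet : 0 < h.det)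
    {b : ℝ} (hb : 0 < b) :
    Summable fun m : Fin 3 → ℤ =>
      nsq (recipVec h m) ^ 2 * Real.exp (-(b * nsq (recipVec h m))) := by
  obtain ⟨c, hc, hcle⟩ := recip_lower h hdet
  have hmain := (summable_gauss_pi (a := b * c / 2) (by positivity)).mul_left ((4 / b) ^ 2)
  refine hmain.of_nonneg_of_le
    (fun m => mul_nonneg (by positivity) (Real.exp_nonneg _)) ?_
  intro m
  set x := nsq (recipVec h m) with hx
  have hx0 : 0 ≤ x := nsq_nonneg _
  have h1 : x ≤ (4 / b) * Real.exp (b / 4 * x) := by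
    have h2 : b / 4 * x ≤ Real.exp (b / 4 * x) := by
      have := Real.add_one_le_exp (b / 4 * x); linarith
    calc x = (4 / b) * (b / 4 * x) := by field_simp
      _ ≤ (4 / b) * Real.exp (b / 4 * x) :=
          mul_le_mul_of_nonneg_left h2 (by positivity)
  have h1sq : x ^ 2 ≤ (4 / b) ^ 2 * Real.exp (b / 2 * x) := by
    have := mul_le_mul h1 h1 hx0 (by positivity)
    calc x ^ 2 = x * x := sq x
      _ ≤ ((4 / b) * Real.exp (b / 4 * x)) * ((4 / b) * Real.exp (b / 4 * x)) := this
      _ = (4 / b) ^ 2 * (Real.exp (b / 4 * x) * Real.exp (b / 4 * x)) := by ring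
      _ = (4 / b) ^ 2 * Real.exp (b / 2 * x) := by
          rw [← Real.exp_add]; ring_nf
  calc x ^ 2 * Real.exp (-(b * x))
      ≤ ((4 / b) ^ 2 * Real.exp (b / 2 * x)) * Real.exp (-(b * x)) :=
        mul_le_mul_of_nonneg_right h1sq (Real.exp_nonneg _)
    _ = (4 / b) ^ 2 * Real.exp (b / 2 * x + -(b * x)) := by
        rw [mul_assoc, Real.exp_add]
    _ = (4 / b) ^ 2 * Real.exp (-(b / 2 * x)) := by ring_nf
    _ ≤ (4 / b) ^ 2 * Real.exp (-(b * c / 2 * ∑ i, ((m i : ℝ)) ^ 2)) := by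
        apply mul_le_mul_of_nonneg_left _ (by positivity)
        apply Real.exp_le_exp.mpr
        have := hcle m
        nlinarith

lemma radWeight_nonneg (h : Matrix (Fin 3) (Fin 3) ℝ) {M : ℕ} (w s : Fin M → ℝ)
    (hw : ∀ ℓ, 0 < w ℓ) (hs : ∀ ℓ, 0 < s ℓ) (m : Fin 3 → ℤ) :
    0 ≤ radWeight h w s m := by
  apply Finset.sum_nonneg
  intro ℓ _
  have h1 := hw ℓ; have h2 := hs ℓ; have h3 := nsq_nonneg (recipVec h m)
  have h4 := Real.exp_nonneg (-s ℓ ^ 2 * nsq (recipVec h m) / 4)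
  have h5 : (0:ℝ) ≤ π ^ ((3:ℝ)/2) := Real.rpow_nonneg Real.pi_nonneg _
  positivity

lemma nradWeight_nonneg (h : Matrix (Fin 3) (Fin 3) ℝ) {M : ℕ} (w s : Fin M → ℝ)
    (hw : ∀ ℓ, 0 < w ℓ) (hs : ∀ ℓ, 0 < s ℓ) (m : Fin 3 → ℤ) :
    0 ≤ nradWeight h w s m := by
  apply Finset.sum_nonneg
  intro ℓ _
  have h1 := hw ℓ; have h2 := hs ℓ; have h3 := nsq_nonneg (recipVec h m)
  have h5 : (0:ℝ) ≤ π ^ ((3:ℝ)/2) := Real.rpow_nonneg Real.pi_nonneg _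
  positivity

lemma summable_radWeight (h : Matrix (Fin 3) (Fin 3) ℝ) (hdet : 0 < h.det)
    {M : ℕ} (w s : Fin M → ℝ) (hw : ∀ ℓ, 0 < w ℓ) (hs : ∀ ℓ, 0 < s ℓ) :
    Summable fun m : Fin 3 → ℤ => if m = 0 then (0:ℝ) else radWeight h w s m := by
  have hfull : Summable fun m : Fin 3 → ℤ => radWeight h w s m := by
    unfold radWeight
    apply summable_sum
    intro ℓ _
    have hb : (0:ℝ) < s ℓ ^ 2 / 4 := by have := hs ℓ; positivity
    have := (summable_x_gauss h hdet hb).mul_left (π ^ ((3:ℝ)/2) * w ℓ * s ℓ ^ 5)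
    refine this.congr fun m => ?_
    rw [show -(s ℓ ^ 2 / 4 * nsq (recipVec h m)) = -s ℓ ^ 2 * nsq (recipVec h m) / 4 by ring]
    ring
  refine hfull.of_nonneg_of_le ?_ ?_
  · intro m
    split <;> [exact le_refl 0; exact radWeight_nonneg h w s hw hs m]
  · intro m
    split <;> [exact radWeight_nonneg h w s hw hs m; exact le_refl _]

lemma summable_nradWeight (h : Matrix (Fin 3) (Fin 3) ℝ) (hdet : 0 < h.det)
    {M : ℕ} (w s : Fin M → ℝ) (hw : ∀ ℓ, 0 < w ℓ) (hs : ∀ ℓ, 0 < s ℓ) :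
    Summable fun m : Fin 3 → ℤ => if m = 0 then (0:ℝ) else nradWeight h w s m := by
  have hfull : Summable fun m : Fin 3 → ℤ => nradWeight h w s m := by
    unfold nradWeight
    apply summable_sum
    intro ℓ _
    have hb : (0:ℝ) < s ℓ ^ 2 / 4 := by have := hs ℓ; positivity
    have := (summable_x2_gauss h hdet hb).mul_left (π ^ ((3:ℝ)/2) * w ℓ * s ℓ ^ 7)
    refine this.congr fun m => ?_
    rw [show -(s ℓ ^ 2 / 4 * nsq (recipVec h m)) = -s ℓ ^ 2 * nsq (recipVec h m) / 4 by ring]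
    ring
  refine hfull.of_nonneg_of_le ?_ ?_
  · intro m
    split <;> [exact le_refl 0; exact nradWeight_nonneg h w s hw hs m]
  · intro m
    split <;> [exact nradWeight_nonneg h w s hw hs m; exact le_refl _]

lemma Sr_pos (h : Matrix (Fin 3) (Fin 3) ℝ) (hdet : 0 < h.det)
    {M : ℕ} (hM : 0 < M) (w s : Fin M → ℝ) (hw : ∀ ℓ, 0 < w ℓ) (hs : ∀ ℓ, 0 < s ℓ) :
    0 < Sr h w s := by
  have hone : (fun _ => (1:ℤ) : Fin 3 → ℤ) ≠ 0 := by
    intro hco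
    have := congrFun hco 0
    simp at this
  apply Summable.tsum_pos (summable_radWeight h hdet w s hw hs)
    (g := fun m : Fin 3 → ℤ => if m = 0 then (0:ℝ) else radWeight h w s m)
    (fun m => by split <;> [exact le_refl 0; exact radWeight_nonneg h w s hw hs m])
    (fun _ => (1:ℤ))
  rw [if_neg hone]
  have : Nonempty (Fin M) := Fin.pos_iff_nonempty.mp hM
  apply Finset.sum_pos _ Finset.univ_nonempty
  intro ℓ _
  have h1 := hw ℓ; have h2 := hs ℓ
  have h3 := nsq_recip_pos h hdet hone
  have h4 := Real.exp_pos (-s ℓ ^ 2 * nsq (recipVec h (fun _ => 1)) / 4)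
  have h5 : (0:ℝ) < π ^ ((3:ℝ)/2) := Real.rpow_pos_of_pos Real.pi_pos _
  positivity

lemma Snr_pos (h : Matrix (Fin 3) (Fin 3) ℝ) (hdet : 0 < h.det)
    {M : ℕ} (hM : 0 < M) (w s : Fin M → ℝ) (hw : ∀ ℓ, 0 < w ℓ) (hs : ∀ ℓ, 0 < s ℓ) :
    0 < Snr h w s := by
  have hone : (fun _ => (1:ℤ) : Fin 3 → ℤ) ≠ 0 := by
    intro hco
    have := congrFun hco 0
    simp at this
  apply Summable.tsum_pos (summable_nradWeight h hdet w s hw hs)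
    (g := fun m : Fin 3 → ℤ => if m = 0 then (0:ℝ) else nradWeight h w s m)
    (fun m => by split <;> [exact le_refl 0; exact nradWeight_nonneg h w s hw hs m])
    (fun _ => (1:ℤ))
  rw [if_neg hone]
  have : Nonempty (Fin M) := Fin.pos_iff_nonempty.mp hM
  apply Finset.sum_pos _ Finset.univ_nonempty
  intro ℓ _
  have h1 := hw ℓ; have h2 := hs ℓ
  have h3 := nsq_recip_pos h hdet hone
  have h4 := Real.exp_pos (-s ℓ ^ 2 * nsq (recipVec h (fun _ => 1)) / 4)
  have h5 : (0:ℝ) < π ^ ((3:ℝ)/2) := Real.rpow_pos_of_pos Real.pi_pos _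
  positivity


/-- Unbiasedness of the single-sample random batch pressure estimators:
the expectation (under the radial proposal `𝒫^r(k) ∝ Σ_ℓ π^{3/2} w̃_ℓ s̃_ℓ⁵ |k|² e^{-s̃_ℓ²|k|²/4}`)
of `(S^r/(4 det h²)) |ρ(k)|²/|k|² δ_{μν}` equals `(P^{F,r})_{μν}`, and the expectation
(under the non-radial proposal) of `-(S^{nr}/(8 det h²)) |ρ(k)|² k_μ k_ν/|k|⁴` equals
`(P^{F,nr})_{μν}`. -/
theorem stmt_11 (h : Matrix (Fin 3) (Fin 3) ℝ) (hdet : 0 < h.det)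
    (N : ℕ) (q : Fin N → ℝ) (hq : ∑ i, q i = 0) (r : Fin N → (Fin 3 → ℝ))
    (M : ℕ) (w s : Fin M → ℝ) (hw : ∀ ℓ, 0 < w ℓ) (hs : ∀ ℓ, 0 < s ℓ)
    (μ ν : Fin 3) :
    (∑' m : Fin 3 → ℤ,
        if m = 0 then 0 else
          (radWeight h w s m / Sr h w s) *
            (Sr h w s / (4 * h.det ^ 2) *
              (Complex.normSq (structFactor q r (recipVec h m)) / nsq (recipVec h m)) *
                (if μ = ν then 1 else 0))) =
      ((if μ = ν then 1 else 0) / (4 * h.det ^ 2)) *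
        (∑' m : Fin 3 → ℤ,
          if m = 0 then 0 else
            (∑ ℓ, π ^ ((3 : ℝ) / 2) * w ℓ * s ℓ ^ 5 *
                Real.exp (-s ℓ ^ 2 * nsq (recipVec h m) / 4)) *
              Complex.normSq (structFactor q r (recipVec h m))) ∧
    (∑' m : Fin 3 → ℤ,
        if m = 0 then 0 else
          (nradWeight h w s m / Snr h w s) *
            (-(Snr h w s / (8 * h.det ^ 2)) *
              (Complex.normSq (structFactor q r (recipVec h m)) *
                recipVec h m μ * recipVec h m ν / nsq (recipVec h m) ^ 2))) =
      -(1 / (8 * h.det ^ 2)) *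
        (∑' m : Fin 3 → ℤ,
          if m = 0 then 0 else
            (∑ ℓ, π ^ ((3 : ℝ) / 2) * w ℓ * s ℓ ^ 7 *
                Real.exp (-s ℓ ^ 2 * nsq (recipVec h m) / 4)) *
              Complex.normSq (structFactor q r (recipVec h m)) *
                recipVec h m μ * recipVec h m ν) := by
  have hd : h.det ≠ 0 := ne_of_gt hdet
  constructor
  · rw [← tsum_mul_left]
    apply tsum_congr
    intro m
    by_cases hm : m = 0
    · simp [hm]
    · rw [if_neg hm, if_neg hm]
      rcases Nat.eq_zero_or_pos M with hM | hM
      · subst hM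
        simp [radWeight]
      · have hx : 0 < nsq (recipVec h m) := nsq_recip_pos h hdet hm
        have hSr : 0 < Sr h w s := Sr_pos h hdet hM w s hw hs
        set T := ∑ ℓ, π ^ ((3:ℝ)/2) * w ℓ * s ℓ ^ 5 *
              Real.exp (-s ℓ ^ 2 * nsq (recipVec h m) / 4) with hT
        have hfac : radWeight h w s m = T * nsq (recipVec h m) := by
          rw [hT, Finset.sum_mul]
          exact Finset.sum_congr rfl fun ℓ _ => by ring
        rw [hfac]
        have hx' : nsq (recipVec h m) ≠ 0 := ne_of_gt hx
        have hSr' : Sr h w s ≠ 0 := ne_of_gt hSr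
        field_simp
  · rw [← tsum_mul_left]
    apply tsum_congr
    intro m
    by_cases hm : m = 0
    · simp [hm]
    · rw [if_neg hm, if_neg hm]
      rcases Nat.eq_zero_or_pos M with hM | hM
      · subst hM
        simp [nradWeight]
      · have hx : 0 < nsq (recipVec h m) := nsq_recip_pos h hdet hm
        have hSnr : 0 < Snr h w s := Snr_pos h hdet hM w s hw hs
        set T := ∑ ℓ, π ^ ((3:ℝ)/2) * w ℓ * s ℓ ^ 7 *
              Real.exp (-s ℓ ^ 2 * nsq (recipVec h m) / 4) with hT
        have hfac : nradWeight h w s m = T * nsq (recipVec h m) ^ 2 := by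
          rw [hT, Finset.sum_mul]
          exact Finset.sum_congr rfl fun ℓ _ => by ring
        rw [hfac]
        have hx' : nsq (recipVec h m) ≠ 0 := ne_of_gt hx
        have hSnr' : Snr h w s ≠ 0 := ne_of_gt hSnr
        field_simp
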